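/- arXiv:math/0204026 — 6 statements merged into one kernel-verified Lean document; each statement's English description precedes it below -/
import Mathlib

section
/- For words u and v over an alphabet A, and functions φ_i indexed by letters, the iterated integral functional ⟨w⟩ = ∫_{a≤x_n<⋯<x_1≤b} φ_{i_1}(x_1)⋯φ_{i_n}(x_n) dx satisfies ⟨u⟩·⟨v⟩ = ⟨u ⧢ v⟩, where ⧢ denotes the shuffle product extended linearly (Chen's lemma). -/
/-- The multiset of shuffles of two words. -/
def shuffles {I : Type*} : List I → List I → Multiset (List I)
  | [], v => {v}
  | a :: u, [] => {a :: u}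
  | a :: u, b :: v =>
      (shuffles u (b :: v)).map (a :: ·) + (shuffles (a :: u) v).map (b :: ·)
  termination_by u v => u.length + v.length

/-- The iterated integral `⟨w⟩(t) = ∫_a^t φ_{i₁}(x₁) ∫_a^{x₁} φ_{i₂}(x₂) ⋯ dx`
associated to a word `w = i₁ i₂ ⋯ iₙ`. -/
noncomputable def iterInt {I : Type*} (φ : I → ℝ → ℝ) (a : ℝ) : List I → ℝ → ℝ
  | [] => fun _ => 1
  | i :: w => fun t => ∫ x in a..t, φ i x * iterInt φ a w x

/-!
Both sides of Chen's identity, viewed as functions of the upper endpoint `t`, vanish at `t = a`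
once `u` and `v` are nonempty. By the fundamental theorem of calculus,
`d/dt ⟨i u⟩ = φ_i ⟨u⟩`, so the Leibniz rule differentiates the left-hand side of the identity for
`i u` and `j v` into `φ_i ⟨u⟩⟨j v⟩ + φ_j ⟨i u⟩⟨v⟩`, while the recursion `i u ⧢ j v = i (u ⧢ j v) + j (i u ⧢ v)`
differentiates the right-hand side into `φ_i ⟨u ⧢ j v⟩ + φ_j ⟨i u ⧢ v⟩`. These agree by induction on
the total length, so the two sides agree everywhere.
-/

theorem HasDerivAt.multiset_sum_map {𝕜 F α : Type*} [NontriviallyNormedField 𝕜]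
    [NormedAddCommGroup F] [NormedSpace 𝕜 F] {f : α → 𝕜 → F} {f' : α → F} {x : 𝕜}
    (S : Multiset α) (h : ∀ i ∈ S, HasDerivAt (f i) (f' i) x) :
    HasDerivAt (fun y => (S.map fun i => f i y).sum) (S.map f').sum x := by
  induction S using Multiset.induction with
  | empty => simpa using hasDerivAt_const x (0 : F)
  | cons i S ih =>
      simp only [Multiset.map_cons, Multiset.sum_cons]
      exact (h i (Multiset.mem_cons_self i S)).add
        (ih fun j hj => h j (Multiset.mem_cons_of_mem hj))

theorem eq_of_hasDerivAt_eq {𝕜 F : Type*} [RCLike 𝕜] [NormedAddCommGroup F] [NormedSpace 𝕜 F]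
    {f g : 𝕜 → F} {f' : 𝕜 → F} (hf : ∀ x, HasDerivAt f (f' x) x)
    (hg : ∀ x, HasDerivAt g (f' x) x) (x₀ : 𝕜) (hfg : f x₀ = g x₀) : f = g :=
  eq_of_fderiv_eq (fun x => (hf x).differentiableAt) (fun x => (hg x).differentiableAt)
    (fun x => by rw [(hf x).hasFDerivAt.fderiv, (hg x).hasFDerivAt.fderiv]) x₀ hfg

theorem sum_map_shuffles_cons_cons {I M : Type*} [AddCommMonoid M] (f : List I → M)
    (i j : I) (u v : List I) :
    ((shuffles (i :: u) (j :: v)).map f).sum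
      = ((shuffles u (j :: v)).map fun w => f (i :: w)).sum
        + ((shuffles (i :: u) v).map fun w => f (j :: w)).sum := by
  rw [shuffles, Multiset.map_add, Multiset.sum_add, Multiset.map_map, Multiset.map_map]
  rfl

section IterInt

variable {I : Type*}

theorem iterInt_cons_self (φ : I → ℝ → ℝ) (a : ℝ) (i : I) (w : List I) :
    iterInt φ a (i :: w) a = 0 := by
  simp [iterInt]

variable {φ : I → ℝ → ℝ}

theorem continuous_iterInt (hφ : ∀ i, Continuous (φ i)) (a : ℝ) :
    ∀ w : List I, Continuous (iterInt φ a w)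
  | [] => continuous_const
  | i :: w => by
      have hc : Continuous fun x => φ i x * iterInt φ a w x :=
        (hφ i).mul (continuous_iterInt hφ a w)
      exact intervalIntegral.continuous_primitive (fun x y => hc.intervalIntegrable x y) a

theorem hasDerivAt_iterInt_cons (hφ : ∀ i, Continuous (φ i)) (a : ℝ) (i : I) (w : List I)
    (t : ℝ) : HasDerivAt (iterInt φ a (i :: w)) (φ i t * iterInt φ a w t) t := by
  have hc : Continuous fun x => φ i x * iterInt φ a w x :=
    (hφ i).mul (continuous_iterInt hφ a w)
  exact intervalIntegral.integral_hasDerivAt_right (hc.intervalIntegrable a t)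
    (hc.stronglyMeasurableAtFilter _ _) hc.continuousAt

theorem hasDerivAt_sum_map_iterInt_cons (hφ : ∀ i, Continuous (φ i)) (a : ℝ) (i : I)
    (S : Multiset (List I)) (t : ℝ) :
    HasDerivAt (fun s => (S.map fun w => iterInt φ a (i :: w) s).sum)
      (φ i t * (S.map fun w => iterInt φ a w t).sum) t := by
  rw [← Multiset.sum_map_mul_left]
  exact HasDerivAt.multiset_sum_map S fun w _ => hasDerivAt_iterInt_cons hφ a i w t

theorem iterInt_mul_iterInt (hφ : ∀ i, Continuous (φ i)) (a : ℝ) :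
    ∀ u v : List I, (fun t => iterInt φ a u t * iterInt φ a v t)
      = fun t => ((shuffles u v).map fun w => iterInt φ a w t).sum
  | [], v => by simp [shuffles, iterInt]
  | i :: u, [] => by simp [shuffles, iterInt]
  | i :: u, j :: v => by
      have ih_left := congrFun (iterInt_mul_iterInt hφ a u (j :: v))
      have ih_right := congrFun (iterInt_mul_iterInt hφ a (i :: u) v)
      simp only [sum_map_shuffles_cons_cons]
      refine eq_of_hasDerivAt_eq (f' := fun t =>
          φ i t * ((shuffles u (j :: v)).map fun w => iterInt φ a w t).sum
            + φ j t * ((shuffles (i :: u) v).map fun w => iterInt φ a w t).sum)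
        (fun t => ?_) (fun t => ?_) a ?_
      · exact ((hasDerivAt_iterInt_cons hφ a i u t).mul
          (hasDerivAt_iterInt_cons hφ a j v t)).congr_deriv (by rw [← ih_left, ← ih_right]; ring)
      · exact (hasDerivAt_sum_map_iterInt_cons hφ a i _ t).add
          (hasDerivAt_sum_map_iterInt_cons hφ a j _ t)
      · simp [iterInt_cons_self]
  termination_by u v => u.length + v.length

end IterInt

/-- **Chen's lemma**: the product of two iterated integrals is the iterated
integral of the shuffle product of the corresponding words,
`⟨u⟩·⟨v⟩ = ⟨u ⧢ v⟩` (the shuffle product extended linearly). -/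
theorem chen_lemma {I : Type*} (φ : I → ℝ → ℝ) (hφ : ∀ i, Continuous (φ i))
    (a b : ℝ) (u v : List I) :
    iterInt φ a u b * iterInt φ a v b
      = ((shuffles u v).map (fun w => iterInt φ a w b)).sum :=
  congrFun (iterInt_mul_iterInt hφ a u v) b
end

section
/- For nonzero elements x_1,…,x_m of a field (such that all partial sums x_{σ(1)}+⋯+x_{σ(k)} are nonzero), ∑_{σ∈S_m} 1/(x_{σ(1)}(x_{σ(1)}+x_{σ(2)})⋯(x_{σ(1)}+⋯+x_{σ(m)})) = 1/(x_1 x_2 ⋯ x_m). -/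
/-!
Induct on `m`, sorting the permutations of `Fin (m + 1)` by their last value `p`. The last partial
sum is always the total sum `S`, and the remaining factors run over all orderings of the other
`m` elements, so by induction they contribute `(∏_{j ≠ p} x j)⁻¹ = x p / ∏ x`. Summing over `p`
gives `S / ∏ x`, and the common factor `S⁻¹` cancels `S`.
-/

open Finset Equiv

def Equiv.Perm.decomposeFinLast {n : ℕ} : Perm (Fin (n + 1)) ≃ Fin (n + 1) × Perm (Fin n) :=
  ((permCongr finSuccEquivLast).trans Perm.decomposeOption).trans
    (prodCongr finSuccEquivLast.symm (Equiv.refl _))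

@[simp]
theorem Equiv.Perm.decomposeFinLast_symm_apply_castSucc {n : ℕ} (p : Fin (n + 1))
    (e : Perm (Fin n)) (i : Fin n) :
    decomposeFinLast.symm (p, e) i.castSucc = swap (Fin.last n) p (e i).castSucc := by
  simp [decomposeFinLast, permCongr_def, ← finSuccEquivLast.symm.injective.swap_apply]

theorem Fin.prod_swap_last_castSucc {M : Type*} [CommMonoid M] {n : ℕ} (x : Fin (n + 1) → M)
    (p : Fin (n + 1)) : (∏ i : Fin n, x (swap (Fin.last n) p i.castSucc)) * x p = ∏ i, x i := by
  rw [← Equiv.prod_comp (swap (Fin.last n) p) x, Fin.prod_univ_castSucc, swap_apply_left]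

theorem Fin.sum_Iic_last {M : Type*} [AddCommMonoid M] {n : ℕ} (f : Fin (n + 1) → M) :
    ∑ i ∈ Iic (Fin.last n), f i = ∑ i, f i := by
  rw [← Fin.top_eq_last, Iic_top]

theorem prod_inv_partial_sums_decomposeFinLast_symm {F : Type*} [Semifield F] {n : ℕ}
    (x : Fin (n + 1) → F) (p : Fin (n + 1)) (e : Perm (Fin n)) :
    ∏ k, (∑ i ∈ Iic k, x (Perm.decomposeFinLast.symm (p, e) i))⁻¹ =
      (∏ k : Fin n, (∑ i ∈ Iic k, x (swap (Fin.last n) p (e i).castSucc))⁻¹) * (∑ i, x i)⁻¹ := by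
  simp only [Fin.prod_univ_castSucc, Fin.sum_Iic_last, Equiv.sum_comp, Fin.sum_Iic_castSucc,
    Perm.decomposeFinLast_symm_apply_castSucc]

/-- For nonzero elements `x₁,…,xₘ` of a field such that all partial sums
`x_{σ(1)} + ⋯ + x_{σ(k)}` (over all permutations `σ`) are nonzero,
`∑_{σ∈Sₘ} 1/(x_{σ(1)}(x_{σ(1)}+x_{σ(2)})⋯(x_{σ(1)}+⋯+x_{σ(m)})) = 1/(x₁ x₂ ⋯ xₘ)`. -/
theorem sum_inv_partial_sums {F : Type*} [Field F] (m : ℕ) (x : Fin m → F)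
    (hx : ∀ i, x i ≠ 0)
    (h : ∀ (σ : Equiv.Perm (Fin m)) (k : Fin m), ∑ i ∈ Finset.Iic k, x (σ i) ≠ 0) :
    ∑ σ : Equiv.Perm (Fin m), ∏ k : Fin m, (∑ i ∈ Finset.Iic k, x (σ i))⁻¹
      = (∏ i : Fin m, x i)⁻¹ := by
  induction m with
  | zero => simp
  | succ n ih =>
    have hS : ∑ i, x i ≠ 0 := by simpa [Fin.sum_Iic_last] using h 1 (Fin.last n)
    rw [← Perm.decomposeFinLast.symm.sum_comp, Fintype.sum_prod_type]
    calc _ = ∑ p, (∏ j : Fin n, x (swap (Fin.last n) p j.castSucc))⁻¹ * (∑ i, x i)⁻¹ := by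
          refine sum_congr rfl fun p _ => ?_
          simp_rw [prod_inv_partial_sums_decomposeFinLast_symm, ← sum_mul]
          rw [ih (fun j => x (swap (Fin.last n) p j.castSucc)) (fun _ => hx _) fun e k => by
            simpa [Fin.sum_Iic_castSucc] using h (Perm.decomposeFinLast.symm (p, e)) k.castSucc]
      _ = ∑ p, (∏ i, x i)⁻¹ * x p * (∑ i, x i)⁻¹ := by
          refine sum_congr rfl fun p _ => ?_
          rw [← Fin.prod_swap_last_castSucc x p, mul_inv, inv_mul_cancel_right₀ (hx p)]
      _ = (∏ i, x i)⁻¹ := by rw [← sum_mul, ← mul_sum, mul_inv_cancel_right₀ hS]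
end

section
/- For any n ≥ 1 and nonzero elements x_1,…,x_n of a field with all partial sums nonzero, ∑_{k=0}^{n} (−1)^k R(x_k, x_{k-1},…,x_1) R(x_{k+1}, x_{k+2},…,x_n) = 0, where R(z_1,…,z_r) = 1/(z_1(z_1+z_2)⋯(z_1+⋯+z_r)) and R of the empty sequence is 1. -/
/-!
Put `S i = x₁ + ⋯ + xᵢ` (so `S 0 = 0`). Then `R(x_k,…,x₁) = ∏_{i<k} (S k - S i)⁻¹` and
`R(x_{k+1},…,xₙ) = ∏_{i>k} (S i - S k)⁻¹`, so the `k`-th term equals `(-1)ⁿ ∏_{i≠k} (S k - S i)⁻¹`,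
`(-1)ⁿ` times the Lagrange nodal weight of the node `S k` among the `n + 1` distinct nodes
`S 0, …, S n`. These weights sum to the coefficient of `Xⁿ` in the interpolant of the constant `1`,
which is `0` since `n ≥ 1`.
-/

/-- `R(z₁,…,z_r) = 1/(z₁(z₁+z₂)⋯(z₁+⋯+z_r))`, with `R` of the empty sequence equal
to `1`, for a sequence given as a list. -/
def Rfun {F : Type*} [Field F] (l : List F) : F :=
  ∏ j ∈ Finset.range l.length, ((l.take (j + 1)).sum)⁻¹

open Finset

theorem Lagrange.sum_nodalWeight_eq_zero {F ι : Type*} [Field F] [DecidableEq ι] {s : Finset ι}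
    {v : ι → F} (hvs : Set.InjOn v s) (hs : 2 ≤ #s) : ∑ i ∈ s, nodalWeight s v i = 0 := by
  have h := coeff_eq_sum hvs (P := 1) (by rw [Polynomial.degree_one]; exact_mod_cast (by omega))
  rw [Polynomial.coeff_one, if_neg (by omega)] at h
  simpa [nodalWeight, prod_inv_distrib, div_eq_mul_inv] using h.symm

theorem List.sum_take_drop {M : Type*} [AddCommGroup M] (l : List M) (k j : ℕ) :
    ((l.drop k).take j).sum = (l.take (k + j)).sum - (l.take k).sum := by
  rw [List.take_add, List.sum_append, add_sub_cancel_left]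

theorem List.sum_take_reverse {M : Type*} [AddCommGroup M] (l : List M) (j : ℕ) :
    (l.reverse.take j).sum = l.sum - (l.take (l.length - j)).sum := by
  rw [List.take_reverse, List.sum_reverse, ← List.sum_take_add_sum_drop l (l.length - j),
    add_sub_cancel_left]

theorem Rfun_reverse {F : Type*} [Field F] (m : List F) :
    Rfun m.reverse = ∏ i ∈ range m.length, (m.sum - (m.take i).sum)⁻¹ := by
  rw [Rfun, List.length_reverse, ← prod_range_reflect]
  refine prod_congr rfl fun j hj => ?_
  rw [List.sum_take_reverse, show m.length - (m.length - 1 - j + 1) = j by grind]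

theorem Rfun_take_reverse {F : Type*} [Field F] (l : List F) {k : ℕ} (hk : k ≤ l.length) :
    Rfun (l.take k).reverse = ∏ i ∈ range k, ((l.take k).sum - (l.take i).sum)⁻¹ := by
  rw [Rfun_reverse, List.length_take_of_le hk]
  refine prod_congr rfl fun i hi => ?_
  rw [List.take_take, min_eq_left (mem_range.mp hi).le]

theorem Rfun_drop {F : Type*} [Field F] (l : List F) (k : ℕ) :
    Rfun (l.drop k) = ∏ i ∈ Ico (k + 1) (l.length + 1), ((l.take i).sum - (l.take k).sum)⁻¹ := by
  rw [Rfun, List.length_drop, prod_Ico_eq_prod_range, Nat.add_sub_add_right]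
  refine prod_congr rfl fun j _ => ?_
  rw [List.sum_take_drop, add_assoc, add_comm 1 j]

theorem Finset.range_succ_erase (n : ℕ) {k : ℕ} (hk : k ≤ n) :
    (range (n + 1)).erase k = range k ∪ Ico (k + 1) (n + 1) := by
  ext i
  simp only [mem_erase, mem_range, mem_union, mem_Ico]
  omega

theorem neg_one_pow_mul_Rfun_take_reverse_mul_Rfun_drop {F : Type*} [Field F] (l : List F) {k : ℕ}
    (hk : k ≤ l.length) :
    (-1) ^ k * (Rfun (l.take k).reverse * Rfun (l.drop k)) =
      (-1) ^ l.length *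
        Lagrange.nodalWeight (range (l.length + 1)) (fun i => (l.take i).sum) k := by
  have hdisj : Disjoint (range k) (Ico (k + 1) (l.length + 1)) :=
    disjoint_left.mpr fun i hi hi' => by simp only [mem_range, mem_Ico] at hi hi'; omega
  have hsign : Rfun (l.drop k) =
      (-1) ^ (l.length - k) *
        ∏ i ∈ Ico (k + 1) (l.length + 1), ((l.take k).sum - (l.take i).sum)⁻¹ := by
    rw [Rfun_drop, ← Nat.add_sub_add_right l.length 1 k, ← Nat.card_Ico, ← prod_neg]
    exact prod_congr rfl fun i _ => by rw [← inv_neg, neg_sub]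
  rw [Lagrange.nodalWeight, range_succ_erase _ hk, prod_union hdisj, Rfun_take_reverse l hk, hsign,
    ← Nat.add_sub_of_le hk, pow_add, Nat.add_sub_cancel_left]
  ring

theorem injOn_sum_take {M : Type*} [AddCommGroup M] (l : List M)
    (h : ∀ k ≤ l.length, ∀ j < l.length - k, ((l.drop k).take (j + 1)).sum ≠ 0) :
    Set.InjOn (fun i => (l.take i).sum) (range (l.length + 1)) := by
  have hne_of_lt : ∀ a b, a < b → b ≤ l.length → (l.take a).sum ≠ (l.take b).sum := by
    intro a b hab hb
    have := h a (by omega) (b - a - 1) (by omega)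
    rwa [List.sum_take_drop, show a + (b - a - 1 + 1) = b by omega, sub_ne_zero, ne_comm] at this
  intro a ha b hb hab
  simp only [coe_range, Set.mem_Iio] at ha hb
  rcases lt_trichotomy a b with h | h | h
  · exact absurd hab (hne_of_lt a b h (by omega))
  · exact h
  · exact absurd hab.symm (hne_of_lt b a h (by omega))

theorem alternating_R_sum_general {F : Type*} [Field F] (n : ℕ) (hn : 1 ≤ n) (x : Fin n → F)
    (h2 : ∀ k ≤ n, ∀ j < n - k, (((List.ofFn x).drop k).take (j + 1)).sum ≠ 0) :
    ∑ k ∈ Finset.range (n + 1),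
        (-1 : F) ^ k * (Rfun (((List.ofFn x).take k).reverse) * Rfun ((List.ofFn x).drop k))
      = 0 := by
  set l := List.ofFn x
  have hlen : l.length = n := List.length_ofFn
  rw [← hlen] at hn h2 ⊢
  rw [sum_congr rfl fun k hk =>
      neg_one_pow_mul_Rfun_take_reverse_mul_Rfun_drop l (Nat.lt_succ_iff.mp (mem_range.mp hk)),
    ← mul_sum, Lagrange.sum_nodalWeight_eq_zero (injOn_sum_take l h2) (by rw [card_range]; omega),
    mul_zero]

/-- For `n ≥ 1` and elements `x₁,…,xₙ` of a field with all the denominators appearing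
(partial sums of consecutive `xᵢ` in the indicated orders) nonzero,
`∑_{k=0}^{n} (−1)^k R(x_k,…,x₁) R(x_{k+1},…,xₙ) = 0`. -/
theorem alternating_R_sum {F : Type*} [Field F] (n : ℕ) (hn : 1 ≤ n) (x : Fin n → F)
    (h1 : ∀ k ≤ n, ∀ j < k, ((((List.ofFn x).take k).reverse).take (j + 1)).sum ≠ 0)
    (h2 : ∀ k ≤ n, ∀ j < n - k, (((List.ofFn x).drop k).take (j + 1)).sum ≠ 0) :
    ∑ k ∈ Finset.range (n + 1),
        (-1 : F) ^ k * (Rfun (((List.ofFn x).take k).reverse) * Rfun ((List.ofFn x).drop k))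
      = 0 :=
  alternating_R_sum_general n hn x h2
end

section
/- The antisymmetrization identity A R(x_1,…,x_n) := ∑_{σ∈S_n} ε(σ) R(x_{σ(1)},…,x_{σ(n)}) = ∏_{i=1}^n (1/x_i) · ∏_{i<j} (x_j − x_i)/(x_j + x_i), where R(z_1,…,z_n) = 1/(z_1(z_1+z_2)⋯(z_1+⋯+z_n)). -/
/-!
Every ordering `σ` has the same last partial sum `S = x₀ + ⋯ + xₙ`, so grouping the
permutations of `Fin (n + 1)` by the value `j = σ (last n)` gives the recursion
`A(x) = S⁻¹ ∑ⱼ (-1)^(n-j) A(x without xⱼ)`, where `A` is the antisymmetrized `R`.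
Removing `xⱼ` from the right-hand side multiplies it by
`(-1)^(n-j) xⱼ ∏_{i ≠ j} (xⱼ + xᵢ)/(xⱼ - xᵢ)`, so by induction the claim reduces to the
partial fraction identity `∑ⱼ xⱼ ∏_{i ≠ j} (xⱼ + xᵢ)/(xⱼ - xᵢ) = ∑ⱼ xⱼ`. That identity
compares the coefficients of `X^(n-1)` in the Lagrange interpolation of
`∏ (X + xᵢ) - ∏ (X - xᵢ)` at the nodes `xᵢ`.
If two of the `xᵢ` coincide, both sides vanish.
-/

open Finset Equiv Equiv.Perm

open Polynomial in
theorem sum_mul_prod_add_div_sub {F ι : Type*} [Field F] [DecidableEq ι] (s : Finset ι)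
    (v : ι → F) (hv : Set.InjOn v s) :
    ∑ i ∈ s, v i * ∏ j ∈ s.erase i, (v i + v j) / (v i - v j) = ∑ i ∈ s, v i := by
  by_cases h2 : (2 : F) = 0
  · refine sum_congr rfl fun i hi => ?_
    rw [prod_eq_one fun j hj => ?_, mul_one]
    have hsub : v i - v j ≠ 0 := fun h =>
      ne_of_mem_erase hj (hv (mem_of_mem_erase hj) hi (sub_eq_zero.1 h).symm)
    rw [show v i + v j = v i - v j by linear_combination v j * h2, div_self hsub]
  rcases s.eq_empty_or_nonempty with rfl | hs
  · simp
  set P : F[X] := ∏ j ∈ s, (X - C (-v j)) - ∏ j ∈ s, (X - C (v j)) with hP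
  have hdeg : P.degree < #s := by
    have hmonic : ∀ w : ι → F, (∏ j ∈ s, (X - C (w j))).Monic :=
      fun w => monic_prod_of_monic _ _ fun j _ => monic_X_sub_C (w j)
    have hdeg' : ∀ w : ι → F, (∏ j ∈ s, (X - C (w j))).degree = ↑(#s) := fun w => by
      simp [degree_prod]
    calc P.degree < (∏ j ∈ s, (X - C (-v j))).degree :=
          degree_sub_lt_left (by rw [hdeg', hdeg']) (hmonic _).ne_zero
            (by rw [(hmonic _).leadingCoeff, (hmonic _).leadingCoeff])
      _ = #s := hdeg' _
  have hcoeff : P.coeff (#s - 1) = 2 * ∑ i ∈ s, v i := by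
    rw [hP, coeff_sub, prod_X_sub_C_coeff_card_pred _ _ hs.card_pos,
      prod_X_sub_C_coeff_card_pred _ _ hs.card_pos, sum_neg_distrib]
    ring
  have heval : ∀ i ∈ s, P.eval (v i) = 2 * v i * ∏ j ∈ s.erase i, (v i + v j) := fun i hi => by
    simp only [hP, eval_sub, eval_prod, eval_X, eval_C,
      prod_eq_zero (f := fun j => v i - v j) hi (sub_self _), sub_zero, sub_neg_eq_add]
    rw [← mul_prod_erase _ _ hi]
    ring
  have hlagrange := Lagrange.coeff_eq_sum hv hdeg
  rw [hcoeff] at hlagrange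
  refine (mul_left_cancel₀ h2 (hlagrange.trans ?_)).symm
  rw [mul_sum]
  refine sum_congr rfl fun i hi => ?_
  rw [heval i hi, prod_div_distrib]
  ring

theorem sum_ne_zero_of_forall_perm_sum_Iic_ne_zero {M : Type*} [AddCommMonoid M] {n : ℕ}
    (x : Fin n → M) (h : ∀ (σ : Perm (Fin n)) (k : Fin n), ∑ i ∈ Iic k, x (σ i) ≠ 0)
    (T : Finset (Fin n)) (hT : T.Nonempty) : ∑ i ∈ T, x i ≠ 0 := by
  have hpos := hT.card_pos
  have hle : #T ≤ n := by simpa using card_le_univ T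
  obtain ⟨σ, hσ⟩ := Perm.exists_map_finset_eq (Iic (⟨#T - 1, by omega⟩ : Fin n)) T
    (by simp only [Fin.card_Iic]; omega)
  rw [← hσ, sum_map]
  exact h σ _

def antisymmetrization {ι α M : Type*} [Fintype ι] [DecidableEq ι] [AddCommGroup M]
    (f : (ι → α) → M) (x : ι → α) : M :=
  ∑ σ : Perm ι, (sign σ : ℤ) • f (x ∘ σ)

theorem antisymmetrization_eq_zero_of_eq {ι α M : Type*} [Fintype ι] [DecidableEq ι]
    [AddCommGroup M] (f : (ι → α) → M) {x : ι → α} {a b : ι} (hab : a ≠ b) (hx : x a = x b) :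
    antisymmetrization f x = 0 := by
  have hswap : x ∘ swap a b = x := funext fun i => by
    rcases eq_or_ne i a with rfl | hia
    · simp [hx]
    rcases eq_or_ne i b with rfl | hib
    · simp [hx]
    · simp [swap_apply_of_ne_of_ne hia hib]
  refine sum_ninvolution (fun σ => swap a b * σ) (fun σ => ?_) (fun σ _ h => hab ?_)
    (fun _ => mem_univ _) (fun σ => swap_mul_self_mul a b σ)
  · rw [Perm.sign_mul, sign_swap hab, coe_mul, ← Function.comp_assoc, hswap]
    simp
  · simpa using congr($h * σ⁻¹)

section

variable {n : ℕ}

def insertLast (j : Fin (n + 1)) (τ : Perm (Fin n)) : Perm (Fin (n + 1)) :=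
  Fin.cycleIcc j (Fin.last n) * permCongr finSuccEquivLast.symm (optionCongr τ)

@[simp] theorem insertLast_last (j : Fin (n + 1)) (τ : Perm (Fin n)) :
    insertLast j τ (Fin.last n) = j := by
  simp [insertLast, permCongr_apply, Fin.cycleIcc_of_last (Fin.le_last j)]

@[simp] theorem insertLast_castSucc (j : Fin (n + 1)) (τ : Perm (Fin n)) (i : Fin n) :
    insertLast j τ i.castSucc = j.succAbove (τ i) := by
  simpa [insertLast, permCongr_apply] using
    congrFun (Fin.cycleIcc_comp_succAbove j (Fin.last n) (Fin.le_last j)) (τ i)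

theorem sign_insertLast (j : Fin (n + 1)) (τ : Perm (Fin n)) :
    sign (insertLast j τ) = (-1) ^ (n - j : ℕ) * sign τ := by
  simp [insertLast, Fin.sign_cycleIcc_of_le (Fin.le_last j), sign_permCongr]

theorem insertLast_bijective :
    Function.Bijective fun p : Fin (n + 1) × Perm (Fin n) => insertLast p.1 p.2 := by
  rw [Fintype.bijective_iff_injective_and_card]
  refine ⟨fun ⟨j, τ⟩ ⟨j', τ'⟩ h => ?_, by simp [Fintype.card_perm, Nat.factorial_succ]⟩
  have hj : j = j' := by simpa using congr($h (Fin.last n))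
  subst hj
  rw [show τ = τ' from Equiv.ext fun i => by simpa using congr($h i.castSucc)]

theorem prod_prod_Ioi_succAbove {M : Type*} [CommMonoid M] (f : Fin (n + 1) → Fin (n + 1) → M)
    (j : Fin (n + 1)) :
    ∏ i, ∏ k ∈ Ioi i, f i k = (∏ i ∈ Iio j, f i j) * (∏ k ∈ Ioi j, f j k) *
      ∏ i : Fin n, ∏ k ∈ Ioi i, f (j.succAbove i) (j.succAbove k) := by
  have hIoi : ∀ {m} (a : Fin m) (g : Fin m → M),
      ∏ k ∈ Ioi a, g k = ∏ k, if a < k then g k else 1 :=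
    fun a g => by rw [← prod_filter, filter_lt_eq_Ioi]
  have hIio : ∀ g : Fin (n + 1) → M, ∏ i ∈ Iio j, g i = ∏ i, if i < j then g i else 1 :=
    fun g => by rw [← prod_filter, filter_gt_eq_Iio]
  simp only [hIoi, hIio, Fin.prod_univ_succAbove _ j, Fin.succAbove_lt_succAbove_iff, lt_irrefl,
    if_false, one_mul, prod_mul_distrib]
  rw [mul_left_comm, mul_assoc]

variable {F : Type*} [Field F]

/-- The function `R(z₁, …, zₙ) = 1 / (z₁ (z₁ + z₂) ⋯ (z₁ + ⋯ + zₙ))` of the paper. -/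
def prefixSumInvProd (z : Fin n → F) : F :=
  ∏ k, (∑ i ∈ Iic k, z i)⁻¹

theorem prefixSumInvProd_succ (z : Fin (n + 1) → F) :
    prefixSumInvProd z = prefixSumInvProd (z ∘ Fin.castSucc) * (∑ i, z i)⁻¹ := by
  simp [prefixSumInvProd, Fin.prod_univ_castSucc, Fin.sum_Iic_castSucc, ← Fin.top_eq_last,
    mul_comm]

theorem antisymmetrization_prefixSumInvProd_succ (x : Fin (n + 1) → F) :
    antisymmetrization prefixSumInvProd x = (∑ i, x i)⁻¹ * ∑ j : Fin (n + 1),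
      (-1) ^ (n - j : ℕ) * antisymmetrization prefixSumInvProd (x ∘ j.succAbove) := by
  rw [antisymmetrization, ← insertLast_bijective.sum_comp, Fintype.sum_prod_type, mul_sum]
  refine sum_congr rfl fun j _ => ?_
  rw [antisymmetrization, mul_sum, mul_sum]
  refine sum_congr rfl fun τ _ => ?_
  have hinit : (x ∘ insertLast j τ) ∘ Fin.castSucc = (x ∘ j.succAbove) ∘ τ :=
    funext fun i => by simp
  have htotal : ∑ i, (x ∘ insertLast j τ) i = ∑ i, x i := Equiv.sum_comp _ x
  rw [prefixSumInvProd_succ, hinit, htotal, sign_insertLast]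
  simp only [zsmul_eq_mul]
  push_cast
  ring

def pairRatioProd (x : Fin n → F) : F :=
  ∏ i, ∏ j ∈ Ioi i, (x j - x i) / (x j + x i)

theorem pairRatioProd_eq_zero_of_eq {x : Fin n → F} {a b : Fin n} (hab : a ≠ b)
    (hx : x a = x b) : pairRatioProd x = 0 := by
  wlog hlt : a < b generalizing a b
  · exact this hab.symm hx.symm (hab.lt_or_gt.resolve_left hlt)
  exact prod_eq_zero (mem_univ a) (prod_eq_zero (mem_Ioi.2 hlt) (by simp [hx]))

theorem pairRatioProd_succAbove (x : Fin (n + 1) → F) (j : Fin (n + 1)) :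
    pairRatioProd x = (-1) ^ (n - j : ℕ) *
      (∏ i ∈ univ.erase j, (x j + x i) / (x j - x i))⁻¹ * pairRatioProd (x ∘ j.succAbove) := by
  have herase : univ.erase j = Iio j ∪ Ioi j := by
    ext i
    simp
  have hlt : ∀ i ∈ Iio j, (x j - x i) / (x j + x i) = ((x j + x i) / (x j - x i))⁻¹ :=
    fun i _ => (inv_div _ _).symm
  have hgt : ∀ k ∈ Ioi j, (x k - x j) / (x k + x j) = -((x j + x k) / (x j - x k))⁻¹ :=
    fun k _ => by rw [inv_div, ← neg_div, neg_sub, add_comm]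
  rw [pairRatioProd, prod_prod_Ioi_succAbove _ j, prod_congr rfl hlt, prod_congr rfl hgt,
    prod_neg, Fin.card_Ioi, Nat.add_sub_cancel, herase, prod_union (disjoint_left.2
      fun i hi hi' => (mem_Iio.1 hi).asymm (mem_Ioi.1 hi')), mul_inv, prod_inv_distrib,
    prod_inv_distrib]
  simp only [pairRatioProd, Function.comp_apply]
  ring

theorem antisymmetrization_prefixSumInvProd (x : Fin n → F) (hx : Function.Injective x)
    (hsum : ∀ T : Finset (Fin n), T.Nonempty → ∑ i ∈ T, x i ≠ 0) :
    antisymmetrization prefixSumInvProd x = (∏ i, (x i)⁻¹) * pairRatioProd x := by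
  induction n with
  | zero => simp [antisymmetrization, prefixSumInvProd, pairRatioProd]
  | succ n ih =>
    have hne : ∀ i, x i ≠ 0 := fun i => by simpa using hsum {i} (singleton_nonempty i)
    have hratio : ∀ j, ∏ i ∈ univ.erase j, (x j + x i) / (x j - x i) ≠ 0 := fun j =>
      prod_ne_zero_iff.2 fun i hi => by
        have hij := ne_of_mem_erase hi
        exact div_ne_zero (by simpa [sum_pair hij.symm] using hsum {j, i} (insert_nonempty _ _))
          (sub_ne_zero.2 (hx.ne hij.symm))
    have hterm : ∀ j : Fin (n + 1),
        (-1) ^ (n - j : ℕ) * antisymmetrization prefixSumInvProd (x ∘ j.succAbove) =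
          (∏ i, (x i)⁻¹) * pairRatioProd x *
            (x j * ∏ i ∈ univ.erase j, (x j + x i) / (x j - x i)) := fun j => by
      rw [ih _ (hx.comp Fin.succAbove_right_injective) fun T hT => by
          simpa [sum_map] using hsum (T.map j.succAboveEmb) (hT.map),
        pairRatioProd_succAbove x j, Fin.prod_univ_succAbove _ j]
      have hxj := hne j
      have hR := hratio j
      simp only [Function.comp_apply]
      generalize ∏ i ∈ univ.erase j, (x j + x i) / (x j - x i) = R at hR ⊢
      field_simp
    rw [antisymmetrization_prefixSumInvProd_succ, sum_congr rfl fun j _ => hterm j, ← mul_sum,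
      sum_mul_prod_add_div_sub univ x hx.injOn, ← mul_assoc, mul_comm, ← mul_assoc,
      mul_inv_cancel₀ (hsum univ univ_nonempty), one_mul]

end

theorem antisymmetrized_R_general {F : Type*} [Field F] (n : ℕ) (x : Fin n → F)
    (h2 : ∀ (σ : Equiv.Perm (Fin n)) (k : Fin n), ∑ i ∈ Finset.Iic k, x (σ i) ≠ 0) :
    ∑ σ : Equiv.Perm (Fin n), (Equiv.Perm.sign σ : ℤ) •
        ∏ k : Fin n, (∑ i ∈ Finset.Iic k, x (σ i))⁻¹
      = (∏ i : Fin n, (x i)⁻¹) *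
          ∏ i : Fin n, ∏ j ∈ Finset.Ioi i, (x j - x i) / (x j + x i) := by
  show antisymmetrization prefixSumInvProd x = (∏ i, (x i)⁻¹) * pairRatioProd x
  by_cases hx : Function.Injective x
  · exact antisymmetrization_prefixSumInvProd x hx
      (sum_ne_zero_of_forall_perm_sum_Iic_ne_zero x h2)
  · obtain ⟨a, b, hab, hne⟩ : ∃ a b, x a = x b ∧ a ≠ b := by
      simpa [Function.Injective] using hx
    rw [antisymmetrization_eq_zero_of_eq _ hne hab, pairRatioProd_eq_zero_of_eq hne hab,
      mul_zero]

/-- The antisymmetrization identity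
`∑_{σ∈Sₙ} ε(σ) R(x_{σ(1)},…,x_{σ(n)}) = ∏ᵢ (1/xᵢ) · ∏_{i<j} (xⱼ − xᵢ)/(xⱼ + xᵢ)`,
where `R(z₁,…,zₙ) = 1/(z₁(z₁+z₂)⋯(z₁+⋯+zₙ))`; the `xᵢ`, the sums `xᵢ + xⱼ` (`i < j`)
and all partial sums `x_{σ(1)} + ⋯ + x_{σ(k)}` are assumed nonzero. -/
theorem antisymmetrized_R {F : Type*} [Field F] (n : ℕ) (x : Fin n → F)
    (h0 : ∀ i, x i ≠ 0)
    (h1 : ∀ i j : Fin n, i < j → x i + x j ≠ 0)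
    (h2 : ∀ (σ : Equiv.Perm (Fin n)) (k : Fin n), ∑ i ∈ Finset.Iic k, x (σ i) ≠ 0) :
    ∑ σ : Equiv.Perm (Fin n), (Equiv.Perm.sign σ : ℤ) •
        ∏ k : Fin n, (∑ i ∈ Finset.Iic k, x (σ i))⁻¹
      = (∏ i : Fin n, (x i)⁻¹) *
          ∏ i : Fin n, ∏ j ∈ Finset.Ioi i, (x j - x i) / (x j + x i) :=
  antisymmetrized_R_general n x h2
end

section
/- Minor summation formula for hyperpfaffians: for a skew-symmetric tensor A of order 2m in dimension 2mn, a 2mn×2mn matrix T, and t ≤ n, define Q_{i_1⋯i_{2m}} = ∑_{k_1<⋯<k_{2m}} a_{k_1⋯k_{2m}} det(T^{i_1⋯i_{2m}}_{k_1⋯k_{2m}}). Then ∑_{k_1<⋯<k_{2mt}} Pf^{[2m]}(A_{k_1⋯k_{2mt}}) · det(T^{1⋯2mt}_{k_1⋯k_{2mt}}) = Pf^{[2m]}(Q) (the hyperpfaffian of Q restricted to indices 1,…,2mt). -/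
/-- The index `2*p+j` of the `j`-th member of the `p`-th pair. -/
def pairIdx {n : ℕ} (p : Fin n) (j : Fin 2) : Fin (2 * n) :=
  ⟨2 * p.val + j.val, by have := p.isLt; have := j.isLt; omega⟩

/-- Permutations of `{1,…,2n}` encoding perfect matchings:
`σ(2p) < σ(2p+1)` and the first members are increasing. -/
def matchings (n : ℕ) : Finset (Equiv.Perm (Fin (2 * n))) :=
  Finset.univ.filter fun σ =>
    (∀ p : Fin n, σ (pairIdx p 0) < σ (pairIdx p 1)) ∧
    (∀ p q : Fin n, p < q → σ (pairIdx p 0) < σ (pairIdx q 0))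

/-- The Pfaffian of a `2n × 2n` antisymmetric matrix: signed sum over perfect matchings. -/
def pfaffian {K : Type*} [CommRing K] (n : ℕ) (A : Fin (2 * n) → Fin (2 * n) → K) : K :=
  ∑ σ ∈ matchings n, (Equiv.Perm.sign σ : ℤ) •
    ∏ p : Fin n, A (σ (pairIdx p 0)) (σ (pairIdx p 1))

/-- The hafnian of a `2n × 2n` symmetric matrix: unsigned sum over perfect matchings. -/
def hafnian {K : Type*} [CommRing K] (n : ℕ) (A : Fin (2 * n) → Fin (2 * n) → K) : K :=
  ∑ σ ∈ matchings n, ∏ p : Fin n, A (σ (pairIdx p 0)) (σ (pairIdx p 1))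

/-- The index `p*k + i` (member `i` of block `p`). -/
def blkIdx {n k : ℕ} (p : Fin n) (i : Fin k) : Fin (n * k) :=
  ⟨p.val * k + i.val, by
    have hp := p.isLt; have hi := i.isLt
    have h1 : p.val * k + i.val < (p.val + 1) * k := by rw [Nat.add_mul, Nat.one_mul]; omega
    have h2 : (p.val + 1) * k ≤ n * k := Nat.mul_le_mul_right k hp
    omega⟩

/-- `E_{nk,k}`: permutations increasing on each block of size `k`,
with increasing block minima. -/
def blockPerms (n k : ℕ) : Finset (Equiv.Perm (Fin (n * k))) :=
  Finset.univ.filter fun σ =>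
    (∀ (p : Fin n) (i j : Fin k), i < j → σ (blkIdx p i) < σ (blkIdx p j)) ∧
    (∀ p q : Fin n, p < q → ∀ i : Fin k, σ (blkIdx p ⟨0, i.pos⟩) < σ (blkIdx q ⟨0, i.pos⟩))

/-- The hyperpfaffian of an alternating tensor of order `k` in dimension `n*k`. -/
def hyperPf {K : Type*} [CommRing K] (n k : ℕ) (M : (Fin k → Fin (n * k)) → K) : K :=
  ∑ σ ∈ blockPerms n k, (Equiv.Perm.sign σ : ℤ) •
    ∏ p : Fin n, M fun i => σ (blkIdx p i)

/-- The hyperhafnian of a symmetric tensor of order `k` in dimension `n*k`. -/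
def hyperHf {K : Type*} [CommRing K] (n k : ℕ) (M : (Fin k → Fin (n * k)) → K) : K :=
  ∑ σ ∈ blockPerms n k, ∏ p : Fin n, M fun i => σ (blkIdx p i)

/-!
Let `E = blockPerms t k` and let `W` be the group of permutations that permute the `t` blocks
and permute inside each block. Sorting each block and then the blocks by their minima shows that
`E` is a transversal of the left cosets of `W`. For an alternating tensor and even `k`, the signed
summand `sign σ • ∏ₚ M (σ ∘ blkIdx p)` of the hyperpfaffian is invariant under `σ ↦ σ * w`,
`w ∈ W`, so `σ ↦ sort (ρ * σ)` is a bijection of `E` showing that relabelling by `ρ` multiplies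
the hyperpfaffian by `sign ρ`; if moreover a transposition `swap x y` fixes the tensor, the
summands cancel in pairs under `σ ↦ sort (swap x y * σ)`, the fixed points being the `σ` with `x`
and `y` in one block.

Expanding every minor of `T` as a sum over injective choices of columns, both sides become
`∑_{h injective} Pf(A ∘ h) ∏ₓ T x (h x)`: the left side by the alternation of `h ↦ Pf(A ∘ h)`,
the right side by multiplying out the product over the blocks, the terms with non-injective `h`
cancelling as above.
-/

namespace HyperPfaffian

open Finset Equiv Equiv.Perm

section Blocks

variable {t k : ℕ}

theorem blkIdx_eq_finProdFinEquiv (p : Fin t) (i : Fin k) :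
    blkIdx p i = finProdFinEquiv (p, i) := by
  ext
  simp only [blkIdx, finProdFinEquiv_apply_val]
  ring

theorem blkIdx_inj {p q : Fin t} {i j : Fin k} :
    blkIdx p i = blkIdx q j ↔ p = q ∧ i = j := by
  simp [blkIdx_eq_finProdFinEquiv]

theorem exists_blkIdx_eq (x : Fin (t * k)) : ∃ p i, blkIdx p i = x :=
  ⟨_, _, by rw [blkIdx_eq_finProdFinEquiv, Equiv.apply_symm_apply]⟩

theorem perm_ext_blkIdx {f g : Perm (Fin (t * k))}
    (h : ∀ p i, f (blkIdx p i) = g (blkIdx p i)) : f = g := by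
  ext1 x
  obtain ⟨p, i, rfl⟩ := exists_blkIdx_eq x
  exact h p i

def wreathPerm (ω : Perm (Fin t)) (ν : Fin t → Perm (Fin k)) : Perm (Fin (t * k)) :=
  finProdFinEquiv.permCongr (prodCongrLeft (fun _ => ω) * prodCongrRight ν)

@[simp]
theorem wreathPerm_blkIdx (ω : Perm (Fin t)) (ν : Fin t → Perm (Fin k)) (p : Fin t) (i : Fin k) :
    wreathPerm ω ν (blkIdx p i) = blkIdx (ω p) (ν p i) := by
  simp [wreathPerm, blkIdx_eq_finProdFinEquiv, permCongr_apply]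

theorem wreathPerm_mul (ω ω' : Perm (Fin t)) (ν ν' : Fin t → Perm (Fin k)) :
    wreathPerm ω ν * wreathPerm ω' ν' = wreathPerm (ω * ω') (fun p => ν (ω' p) * ν' p) :=
  perm_ext_blkIdx fun p i => by simp

theorem wreathPerm_inv (ω : Perm (Fin t)) (ν : Fin t → Perm (Fin k)) :
    (wreathPerm ω ν)⁻¹ = wreathPerm ω⁻¹ (fun p => (ν (ω⁻¹ p))⁻¹) := by
  rw [inv_eq_iff_mul_eq_one]
  exact perm_ext_blkIdx fun p i => by simp

theorem sign_wreathPerm (hk : Even k) (ω : Perm (Fin t)) (ν : Fin t → Perm (Fin k)) :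
    sign (wreathPerm ω ν) = ∏ p, sign (ν p) := by
  rw [wreathPerm, sign_permCongr, map_mul, sign_prodCongrLeft, sign_prodCongrRight,
    prod_const, card_univ, Fintype.card_fin]
  obtain ⟨r, hr⟩ := hk
  have hω : sign ω ^ k = 1 := by rw [hr, ← two_mul, pow_mul, Int.units_sq, one_pow]
  rw [hω, one_mul]

def wreathSubgroup (t k : ℕ) : Subgroup (Perm (Fin (t * k))) where
  carrier := Set.range fun x : Perm (Fin t) × (Fin t → Perm (Fin k)) => wreathPerm x.1 x.2
  mul_mem' := by
    rintro _ _ ⟨⟨ω, ν⟩, rfl⟩ ⟨⟨ω', ν'⟩, rfl⟩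
    exact ⟨(ω * ω', fun p => ν (ω' p) * ν' p), (wreathPerm_mul ω ω' ν ν').symm⟩
  one_mem' := ⟨(1, fun _ => 1), perm_ext_blkIdx fun p i => by simp⟩
  inv_mem' := by
    rintro _ ⟨⟨ω, ν⟩, rfl⟩
    exact ⟨(ω⁻¹, fun p => (ν (ω⁻¹ p))⁻¹), (wreathPerm_inv ω ν).symm⟩

theorem mem_wreathSubgroup {w : Perm (Fin (t * k))} :
    w ∈ wreathSubgroup t k ↔ ∃ ω ν, wreathPerm ω ν = w :=
  ⟨fun ⟨x, hx⟩ => ⟨x.1, x.2, hx⟩, fun ⟨ω, ν, hw⟩ => ⟨(ω, ν), hw⟩⟩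

theorem mem_blockPerms {σ : Perm (Fin (t * k))} :
    σ ∈ blockPerms t k ↔ (∀ p, StrictMono fun i => σ (blkIdx p i)) ∧
      ∀ hk : 0 < k, StrictMono fun p => σ (blkIdx p ⟨0, hk⟩) := by
  simp only [blockPerms, mem_filter, mem_univ, true_and, StrictMono]
  exact and_congr Iff.rfl ⟨fun h hk p q hpq => h p q hpq ⟨0, hk⟩, fun h p q hpq i => h i.pos hpq⟩

theorem exists_mul_mem_blockPerms (θ : Perm (Fin (t * k))) :
    ∃ w ∈ wreathSubgroup t k, θ * w ∈ blockPerms t k := by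
  rcases Nat.eq_zero_or_pos k with rfl | hk
  · exact ⟨1, one_mem _, mem_blockPerms.2 ⟨fun _ i => i.elim0, fun hk => absurd hk (lt_irrefl 0)⟩⟩
  let f (q : Fin t) (i : Fin k) := θ (blkIdx q i)
  have hf (q : Fin t) : Function.Injective (f q) := fun i j h => (blkIdx_inj.1 (θ.injective h)).2
  let ν (q : Fin t) := Tuple.sort (f q)
  let mins (q : Fin t) := f q (ν q ⟨0, hk⟩)
  have hmins : Function.Injective mins := fun p q h => (blkIdx_inj.1 (θ.injective h)).1
  let ω := Tuple.sort mins
  refine ⟨wreathPerm ω (fun p => ν (ω p)), mem_wreathSubgroup.2 ⟨_, _, rfl⟩,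
    mem_blockPerms.2 ⟨?_, ?_⟩⟩
  · intro p
    simp only [Perm.mul_apply, wreathPerm_blkIdx]
    exact (Tuple.monotone_sort (f (ω p))).strictMono_of_injective ((hf _).comp (ν _).injective)
  · intro _
    simp only [Perm.mul_apply, wreathPerm_blkIdx]
    exact (Tuple.monotone_sort mins).strictMono_of_injective (hmins.comp ω.injective)

theorem mul_eq_self_of_mem_blockPerms {σ w : Perm (Fin (t * k))} (hσ : σ ∈ blockPerms t k)
    (hw : w ∈ wreathSubgroup t k) (hσw : σ * w ∈ blockPerms t k) : σ * w = σ := by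
  obtain ⟨ω, ν, rfl⟩ := mem_wreathSubgroup.1 hw
  rw [mem_blockPerms] at hσ hσw
  simp only [Perm.mul_apply, wreathPerm_blkIdx] at hσw
  let f (q : Fin t) (i : Fin k) := σ (blkIdx q i)
  have hν (p : Fin t) : f (ω p) ∘ ν p = f (ω p) :=
    Tuple.unique_monotone (τ := 1) (hσw.1 p).monotone (hσ.1 (ω p)).monotone
  refine perm_ext_blkIdx fun p i => ?_
  have hk := i.pos
  let g (q : Fin t) := f q ⟨0, hk⟩
  have hω : g ∘ ω = g := by
    refine Tuple.unique_monotone (τ := 1) (StrictMono.monotone fun p q hpq => ?_) (hσ.2 hk).monotone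
    show f (ω p) _ < f (ω q) _
    rw [← congrFun (hν p), ← congrFun (hν q)]
    exact hσw.2 hk hpq
  have hωp : ω p = p := (hσ.2 hk).injective (congrFun hω p)
  simp only [Perm.mul_apply, wreathPerm_blkIdx]
  exact (congrFun (hν p) i).trans (by rw [hωp])

/-- The representative in `blockPerms t k` of the coset `θ • wreathSubgroup t k`. -/
noncomputable def blockSort (θ : Perm (Fin (t * k))) : Perm (Fin (t * k)) :=
  θ * (exists_mul_mem_blockPerms θ).choose

theorem blockSort_mem (θ : Perm (Fin (t * k))) : blockSort θ ∈ blockPerms t k :=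
  (exists_mul_mem_blockPerms θ).choose_spec.2

theorem exists_blockSort_eq_mul (θ : Perm (Fin (t * k))) :
    ∃ w ∈ wreathSubgroup t k, blockSort θ = θ * w :=
  ⟨_, (exists_mul_mem_blockPerms θ).choose_spec.1, rfl⟩

theorem blockSort_eq_self {σ : Perm (Fin (t * k))} (hσ : σ ∈ blockPerms t k) :
    blockSort σ = σ :=
  mul_eq_self_of_mem_blockPerms hσ (exists_mul_mem_blockPerms σ).choose_spec.1 (blockSort_mem σ)

theorem blockSort_mul_of_mem {w : Perm (Fin (t * k))} (θ : Perm (Fin (t * k)))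
    (hw : w ∈ wreathSubgroup t k) : blockSort (θ * w) = blockSort θ := by
  obtain ⟨w₁, hw₁, h₁⟩ := exists_blockSort_eq_mul (θ * w)
  obtain ⟨w₂, hw₂, h₂⟩ := exists_blockSort_eq_mul θ
  have h : blockSort (θ * w) = blockSort θ * (w₂⁻¹ * w * w₁) := by rw [h₁, h₂]; group
  rw [h]
  refine mul_eq_self_of_mem_blockPerms (blockSort_mem θ) ?_ (h ▸ blockSort_mem _)
  exact mul_mem (mul_mem (inv_mem hw₂) hw) hw₁

theorem blockSort_mul_blockSort (ρ θ : Perm (Fin (t * k))) :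
    blockSort (ρ * blockSort θ) = blockSort (ρ * θ) := by
  obtain ⟨w, hw, h⟩ := exists_blockSort_eq_mul θ
  rw [h, ← mul_assoc, blockSort_mul_of_mem _ hw]

theorem exists_block_of_swap_mul_eq (hk : Even k) {θ w : Perm (Fin (t * k))} {x y : Fin (t * k)}
    (hw : w ∈ wreathSubgroup t k) (h : swap x y * θ = θ * w) :
    ∃ p i j, θ (blkIdx p i) = x ∧ θ (blkIdx p j) = y := by
  obtain ⟨ω, ν, rfl⟩ := mem_wreathSubgroup.1 hw
  obtain ⟨p, i, hpi⟩ := exists_blkIdx_eq (θ⁻¹ x)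
  obtain ⟨q, j, hqj⟩ := exists_blkIdx_eq (θ⁻¹ y)
  have hx : θ (blkIdx p i) = x := by rw [hpi]; exact θ.apply_symm_apply x
  have hy : θ (blkIdx q j) = y := by rw [hqj]; exact θ.apply_symm_apply y
  have heval (z : Fin (t * k)) : swap x y (θ z) = θ (wreathPerm ω ν z) := DFunLike.congr_fun h z
  have hωp : ω p = q := by
    have := heval (blkIdx p i)
    rw [hx, swap_apply_left, ← hy, wreathPerm_blkIdx] at this
    exact (blkIdx_inj.1 (θ.injective this)).1.symm
  -- a block has a second member, which the swap must fix
  have : Nontrivial (Fin k) :=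
    Fin.nontrivial_iff_two_le.2 (by obtain ⟨r, hr⟩ := hk; have := i.pos; omega)
  obtain ⟨i', hi'⟩ := exists_ne i
  have hqp : q = p := by
    by_contra hqp
    have hx' : θ (blkIdx p i') ≠ x :=
      hx ▸ θ.injective.ne fun h => hi' (blkIdx_inj.1 h).2
    have hy' : θ (blkIdx p i') ≠ y :=
      hy ▸ θ.injective.ne fun h => hqp (blkIdx_inj.1 h).1.symm
    have := heval (blkIdx p i')
    rw [swap_apply_of_ne_of_ne hx' hy', wreathPerm_blkIdx] at this
    exact hqp (hωp.symm.trans (blkIdx_inj.1 (θ.injective this)).1.symm)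
  exact ⟨p, i, j, hx, hqp ▸ hy⟩

theorem sum_blockPerms_mul_left {R : Type*} [AddCommMonoid R] {g : Perm (Fin (t * k)) → R}
    (hg : ∀ θ, ∀ w ∈ wreathSubgroup t k, g (θ * w) = g θ)
    (ρ : Perm (Fin (t * k))) : ∑ σ ∈ blockPerms t k, g (ρ * σ) = ∑ σ ∈ blockPerms t k, g σ := by
  have hsort (θ) : g (blockSort θ) = g θ := by
    obtain ⟨w, hw, h⟩ := exists_blockSort_eq_mul θ
    rw [h, hg θ w hw]
  refine sum_nbij' (fun σ => blockSort (ρ * σ)) (fun σ => blockSort (ρ⁻¹ * σ))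
    (fun _ _ => blockSort_mem _) (fun _ _ => blockSort_mem _) ?_ ?_ fun σ _ => (hsort _).symm
  · intro σ hσ
    rw [blockSort_mul_blockSort, inv_mul_cancel_left, blockSort_eq_self hσ]
  · intro σ hσ
    rw [blockSort_mul_blockSort, mul_inv_cancel_left, blockSort_eq_self hσ]

theorem sum_blockPerms_eq_zero {R : Type*} [AddCommGroup R] {g : Perm (Fin (t * k)) → R}
    (hk : Even k) (hg : ∀ θ, ∀ w ∈ wreathSubgroup t k, g (θ * w) = g θ)
    {x y : Fin (t * k)} (hswap : ∀ θ, g (swap x y * θ) = -g θ)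
    (hblock : ∀ σ p i j, σ (blkIdx p i) = x → σ (blkIdx p j) = y → g σ = 0) :
    ∑ σ ∈ blockPerms t k, g σ = 0 := by
  refine sum_involution (fun σ _ => blockSort (swap x y * σ)) ?_ ?_ (fun _ _ => blockSort_mem _) ?_
  · intro σ _
    obtain ⟨w, hw, h⟩ := exists_blockSort_eq_mul (swap x y * σ)
    rw [h, hg _ w hw, hswap, add_neg_cancel]
  · intro σ _ hσ hfix
    obtain ⟨w, hw, h⟩ := exists_blockSort_eq_mul (swap x y * σ)
    rw [hfix] at h
    have h' : swap x y * σ = σ * w⁻¹ := eq_mul_inv_iff_mul_eq.2 h.symm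
    obtain ⟨p, i, j, hi, hj⟩ := exists_block_of_swap_mul_eq hk (inv_mem hw) h'
    exact hσ (hblock σ p i j hi hj)
  · intro σ hσ
    rw [blockSort_mul_blockSort, ← mul_assoc, swap_mul_self, one_mul, blockSort_eq_self hσ]

end Blocks

def IsAlternating {ι α R : Type*} [DecidableEq ι] [Fintype ι] [AddCommGroup R]
    (F : (ι → α) → R) : Prop :=
  ∀ s (τ : Perm ι), F (s ∘ τ) = (sign τ : ℤ) • F s

theorem IsAlternating.comp {ι α β R : Type*} [DecidableEq ι] [Fintype ι] [AddCommGroup R]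
    {F : (ι → β) → R} (hF : IsAlternating F) (h : α → β) :
    IsAlternating fun s : ι → α => F (h ∘ s) :=
  fun s τ => hF (h ∘ s) τ

section Hyperpfaffian

variable {K : Type*} [CommRing K] {t k : ℕ} {M : (Fin k → Fin (t * k)) → K}

def hyperPfTerm (M : (Fin k → Fin (t * k)) → K) (σ : Perm (Fin (t * k))) : K :=
  (sign σ : ℤ) • ∏ p, M fun i => σ (blkIdx p i)

theorem hyperPf_eq_sum_hyperPfTerm (M : (Fin k → Fin (t * k)) → K) :
    hyperPf t k M = ∑ σ ∈ blockPerms t k, hyperPfTerm M σ :=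
  rfl

theorem hyperPfTerm_mul_of_mem (hk : Even k) (hM : IsAlternating M) (θ : Perm (Fin (t * k)))
    {w : Perm (Fin (t * k))} (hw : w ∈ wreathSubgroup t k) :
    hyperPfTerm M (θ * w) = hyperPfTerm M θ := by
  obtain ⟨ω, ν, rfl⟩ := mem_wreathSubgroup.1 hw
  have hblock (p : Fin t) : (M fun i => (θ * wreathPerm ω ν) (blkIdx p i)) =
      (sign (ν p) : ℤ) • M fun i => θ (blkIdx (ω p) i) := by
    simp only [Perm.mul_apply, wreathPerm_blkIdx]
    exact hM (fun i => θ (blkIdx (ω p) i)) (ν p)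
  rw [hyperPfTerm, hyperPfTerm, prod_congr rfl fun p _ => hblock p, prod_smul,
    Equiv.prod_comp ω fun q => M fun i => θ (blkIdx q i), Perm.sign_mul, sign_wreathPerm hk,
    smul_smul, ← Units.coe_prod, ← Units.val_mul, mul_assoc, Int.units_mul_self, mul_one]

theorem hyperPf_comp_left (hk : Even k) (hM : IsAlternating M) (ρ : Perm (Fin (t * k))) :
    hyperPf t k (fun s => M (ρ ∘ s)) = (sign ρ : ℤ) • hyperPf t k M := by
  have hterm (σ : Perm (Fin (t * k))) :
      hyperPfTerm (fun s => M (ρ ∘ s)) σ = (sign ρ : ℤ) • hyperPfTerm M (ρ * σ) := by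
    rw [hyperPfTerm, hyperPfTerm, smul_smul, Perm.sign_mul, ← Units.val_mul, ← mul_assoc,
      Int.units_mul_self, one_mul]
    rfl
  rw [hyperPf_eq_sum_hyperPfTerm, hyperPf_eq_sum_hyperPfTerm, sum_congr rfl fun σ _ => hterm σ,
    ← smul_sum, sum_blockPerms_mul_left fun θ _ hw => hyperPfTerm_mul_of_mem hk hM θ hw]

theorem IsAlternating.hyperPf_comp {α : Type*} (hk : Even k) {C : (Fin k → α) → K}
    (hC : IsAlternating C) :
    IsAlternating fun h : Fin (t * k) → α => hyperPf t k (fun s => C (h ∘ s)) :=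
  fun h ρ => hyperPf_comp_left (M := fun s => C (h ∘ s)) hk (hC.comp h) ρ

theorem hyperPf_eq_zero_of_swap (hk : Even k) (hM : IsAlternating M) {x y : Fin (t * k)}
    (hxy : x ≠ y) (hswap : ∀ s, M (swap x y ∘ s) = M s)
    (hzero : ∀ s i j, s i = x → s j = y → M s = 0) : hyperPf t k M = 0 := by
  rw [hyperPf_eq_sum_hyperPfTerm]
  refine sum_blockPerms_eq_zero hk (fun θ _ hw => hyperPfTerm_mul_of_mem hk hM θ hw)
    (x := x) (y := y) (fun θ => ?_) fun σ p i j hi hj => ?_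
  · rw [hyperPfTerm, hyperPfTerm, Perm.sign_mul, sign_swap hxy, neg_one_mul, Units.val_neg,
      neg_smul]
    exact congrArg (fun P => -((sign θ : ℤ) • P)) (prod_congr rfl fun p _ => hswap _)
  · rw [hyperPfTerm, prod_eq_zero (mem_univ p) (hzero _ i j hi hj), smul_zero]

theorem hyperPf_congr {M' : (Fin k → Fin (t * k)) → K}
    (h : ∀ s, Function.Injective s → M s = M' s) : hyperPf t k M = hyperPf t k M' :=
  sum_congr rfl fun σ _ => congrArg _ <| prod_congr rfl fun _ _ =>
    h _ (σ.injective.comp fun _ _ hij => (blkIdx_inj.1 hij).2)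

theorem prod_blkIdx {R : Type*} [CommMonoid R] (σ : Perm (Fin (t * k))) (f : Fin (t * k) → R) :
    ∏ p, ∏ i, f (σ (blkIdx p i)) = ∏ x, f x := by
  simp_rw [blkIdx_eq_finProdFinEquiv, ← Fintype.prod_prod_type']
  exact Equiv.prod_comp (finProdFinEquiv.trans σ) f

theorem hyperPf_sum_mul_prod {α : Type*} [Fintype α] (C : (Fin k → α) → K)
    (B : Fin (t * k) → α → K) :
    hyperPf t k (fun s => ∑ g, C g * ∏ i, B (s i) (g i)) =
      ∑ h : Fin (t * k) → α, (∏ x, B x (h x)) * hyperPf t k (fun s => C (h ∘ s)) := by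
  have hσ (σ : Perm (Fin (t * k))) :
      ∏ p, ∑ g, C g * ∏ i, B (σ (blkIdx p i)) (g i) =
        ∑ h : Fin (t * k) → α, (∏ x, B x (h x)) * ∏ p, C (h ∘ fun i => σ (blkIdx p i)) := by
    let e : (Fin (t * k) → α) ≃ (Fin t → Fin k → α) :=
      ((finProdFinEquiv.trans σ).symm.arrowCongr (Equiv.refl α)).trans (Equiv.curry _ _ _)
    have he (h : Fin (t * k) → α) : e h = fun p i => h (σ (blkIdx p i)) := by
      funext p i
      simp [e, blkIdx_eq_finProdFinEquiv]
    rw [Fintype.prod_sum]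
    refine (Fintype.sum_equiv e _ _ fun h => ?_).symm
    rw [he, prod_mul_distrib, ← prod_blkIdx σ, mul_comm]
    rfl
  calc hyperPf t k (fun s => ∑ g, C g * ∏ i, B (s i) (g i))
      = ∑ σ ∈ blockPerms t k, (sign σ : ℤ) • ∑ h : Fin (t * k) → α,
          (∏ x, B x (h x)) * ∏ p, C (h ∘ fun i => σ (blkIdx p i)) :=
        sum_congr rfl fun σ _ => by rw [← hσ]
    _ = _ := by
        simp only [hyperPf, smul_sum, mul_sum, mul_smul_comm]
        exact sum_comm

theorem sum_strictMono_sum_perm {r : ℕ} {α R : Type*} [Fintype α] [LinearOrder α]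
    [DecidablePred fun κ : Fin r → α => ∀ i j, i < j → κ i < κ j]
    [DecidablePred fun g : Fin r → α => Function.Injective g] [AddCommMonoid R]
    (f : (Fin r → α) → R) :
    ∑ κ ∈ univ.filter (fun κ : Fin r → α => ∀ i j, i < j → κ i < κ j),
        ∑ τ : Perm (Fin r), f (κ ∘ τ) =
      ∑ g ∈ univ.filter (fun g : Fin r → α => Function.Injective g), f g := by
  rw [← sum_product']
  refine sum_nbij' (fun x => x.1 ∘ x.2) (fun g => (g ∘ Tuple.sort g, (Tuple.sort g)⁻¹))
    ?_ ?_ ?_ ?_ fun _ _ => rfl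
  · rintro ⟨κ, τ⟩ hκ
    simp only [mem_product, mem_filter, mem_univ, true_and, and_true] at hκ ⊢
    exact (StrictMono.injective hκ).comp τ.injective
  · intro g hg
    simp only [mem_product, mem_filter, mem_univ, true_and, and_true] at hg ⊢
    exact (Tuple.monotone_sort g).strictMono_of_injective (hg.comp (Tuple.sort g).injective)
  · rintro ⟨κ, τ⟩ hκ
    simp only [mem_product, mem_filter, mem_univ, true_and, and_true] at hκ
    have hκ' : StrictMono κ := hκ
    have hsort : κ ∘ ⇑(τ * Tuple.sort (κ ∘ τ)) = κ ∘ ⇑(1 : Perm (Fin r)) :=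
      Tuple.unique_monotone (Tuple.monotone_sort (κ ∘ τ)) hκ'.monotone
    have hτ : τ * Tuple.sort (κ ∘ τ) = 1 :=
      Equiv.ext fun z => hκ'.injective (congrFun hsort z)
    dsimp only
    rw [eq_inv_of_mul_eq_one_right hτ, inv_inv]
    ext z <;> simp
  · intro g _
    ext z
    simp

theorem sum_strictMono_mul_det {r : ℕ} {α : Type*} [Fintype α] [LinearOrder α]
    [DecidablePred fun κ : Fin r → α => ∀ i j, i < j → κ i < κ j]
    [DecidablePred fun g : Fin r → α => Function.Injective g] {F : (Fin r → α) → K}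
    (hF : IsAlternating F) (B : Fin r → α → K) :
    ∑ κ ∈ univ.filter (fun κ : Fin r → α => ∀ i j, i < j → κ i < κ j),
        F κ * (Matrix.of fun i j => B i (κ j)).det =
      ∑ g ∈ univ.filter (fun g : Fin r → α => Function.Injective g), F g * ∏ i, B i (g i) := by
  rw [← sum_strictMono_sum_perm]
  refine sum_congr rfl fun κ _ => ?_
  rw [← Matrix.det_transpose, Matrix.det_apply, mul_sum]
  refine sum_congr rfl fun τ _ => ?_
  rw [hF, mul_smul_comm, smul_mul_assoc]
  rfl

theorem hyperPf_comp_eq_zero_of_not_injective {α : Type*} (hk : Even k)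
    {C : (Fin k → α) → K} (hC : IsAlternating C) (hC0 : ∀ g, ¬Function.Injective g → C g = 0)
    {h : Fin (t * k) → α} (hh : ¬Function.Injective h) : hyperPf t k (fun s => C (h ∘ s)) = 0 := by
  obtain ⟨x, y, hxy, hne⟩ : ∃ x y, h x = h y ∧ x ≠ y := by
    simpa [Function.Injective] using hh
  have hswap : h ∘ swap x y = h := by
    funext z
    simp only [Function.comp_apply, swap_apply_def]
    split_ifs <;> simp_all
  refine hyperPf_eq_zero_of_swap hk (hC.comp h) hne (fun s => ?_) fun s i j hi hj => hC0 _ ?_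
  · rw [← Function.comp_assoc, hswap]
  · intro hinj
    have hij : i = j := hinj (show h (s i) = h (s j) by rw [hi, hj, hxy])
    exact hne (hi ▸ hj ▸ congrArg s hij)

end Hyperpfaffian

end HyperPfaffian

open HyperPfaffian Finset

/-- **Minor summation formula for hyperpfaffians**: for a skew-symmetric tensor `A` of
order `2m` in dimension `2mn`, a `2mn × 2mn` matrix `T` and `t ≤ n`, with
`Q_{i₁⋯i_{2m}} = ∑_{k₁<⋯<k_{2m}} a_{k₁⋯k_{2m}} det(T^{i₁⋯i_{2m}}_{k₁⋯k_{2m}})`, one has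
`∑_{k₁<⋯<k_{2mt}} Pf^{[2m]}(A_{k₁⋯k_{2mt}}) · det(T^{1⋯2mt}_{k₁⋯k_{2mt}})
  = Pf^{[2m]}(Q)` (hyperpfaffian of `Q` restricted to the indices `1,…,2mt`). -/
theorem minor_summation_hyperpfaffian {K : Type*} [CommRing K] (m n t : ℕ) (ht : t ≤ n)
    (A : (Fin (2 * m) → Fin (n * (2 * m))) → K)
    (hA : ∀ (s : Fin (2 * m) → Fin (n * (2 * m))) (σ : Equiv.Perm (Fin (2 * m))),
      A (s ∘ σ) = (Equiv.Perm.sign σ : ℤ) • A s)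
    (T : Fin (n * (2 * m)) → Fin (n * (2 * m)) → K) :
    ∑ k ∈ Finset.univ.filter
        (fun k : Fin (t * (2 * m)) → Fin (n * (2 * m)) =>
          ∀ i j, i < j → k i < k j),
        hyperPf t (2 * m) (fun s => A (fun i => k (s i)))
          * Matrix.det (Matrix.of fun i j : Fin (t * (2 * m)) =>
              T (Fin.castLE (Nat.mul_le_mul_right (2 * m) ht) i) (k j))
      = hyperPf t (2 * m) (fun s =>
          ∑ κ ∈ Finset.univ.filter
              (fun κ : Fin (2 * m) → Fin (n * (2 * m)) => ∀ i j, i < j → κ i < κ j),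
            A κ * Matrix.det (Matrix.of fun i j : Fin (2 * m) =>
              T (Fin.castLE (Nat.mul_le_mul_right (2 * m) ht) (s i)) (κ j))) := by
  have hk : Even (2 * m) := even_two_mul m
  let B (x : Fin (t * (2 * m))) (y : Fin (n * (2 * m))) : K :=
    T (Fin.castLE (Nat.mul_le_mul_right (2 * m) ht) x) y
  -- `A` need not vanish on non-injective tuples when `2` is a zero divisor in `K`
  let A' (g : Fin (2 * m) → Fin (n * (2 * m))) : K := if Function.Injective g then A g else 0
  have hA' : IsAlternating A' := fun s τ => by
    simp only [A', Function.Injective.of_comp_iff' s τ.bijective]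
    split_ifs
    exacts [hA s τ, (smul_zero _).symm]
  calc _ = ∑ h ∈ univ.filter Function.Injective,
          hyperPf t (2 * m) (fun s => A (h ∘ s)) * ∏ x, B x (h x) :=
        sum_strictMono_mul_det (IsAlternating.hyperPf_comp hk hA) B
    _ = ∑ h, (∏ x, B x (h x)) * hyperPf t (2 * m) (fun s => A' (h ∘ s)) := by
        rw [← sum_filter_add_sum_filter_not univ Function.Injective, add_eq_left.2]
        · refine sum_congr rfl fun h hh => ?_
          refine (mul_comm _ _).trans (congrArg _ (hyperPf_congr fun s hs => ?_))
          exact (if_pos ((mem_filter.1 hh).2.comp hs)).symm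
        · refine sum_eq_zero fun h hh => ?_
          rw [hyperPf_comp_eq_zero_of_not_injective hk hA' (fun g hg => if_neg hg)
            (mem_filter.1 hh).2, mul_zero]
    _ = hyperPf t (2 * m) (fun s => ∑ g, A' g * ∏ i, B (s i) (g i)) :=
        (hyperPf_sum_mul_prod A' B).symm
    _ = _ := by
        congr 1
        funext s
        rw [sum_strictMono_mul_det hA, sum_filter]
        exact sum_congr rfl fun g _ => by simp only [A', ite_mul, zero_mul]; rfl
end

section
/- In the Grassmann algebra over a commutative ring K on generators η_1,…,η_N with coefficients given by an antisymmetric matrix Q, the coefficient of η_{i_1}⋯η_{i_{2n}} (for i_1<⋯<i_{2n}) in the product ∏_i→ (1 + ∑_{i<j} Q_{ij} η_i η_j) equals Pf((Q_{i_k i_l})_{1≤k,l≤2n}). -/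
/-- The `i`-th Grassmann generator `ηᵢ` of the exterior algebra on `N` generators. -/
noncomputable def grassGen (K : Type*) [CommRing K] (N : ℕ) (i : Fin N) :
    ExteriorAlgebra K (Fin N → K) :=
  ExteriorAlgebra.ι K (Pi.single i (1 : K))

/-!
Expanding the ordered product, every term is indexed by a list of pairs
`(i₁, j₁), …, (i_r, j_r)` with `i₁ < ⋯ < i_r` and `i_k < j_k`, and equals
`Q_{i₁j₁} ⋯ Q_{i_rj_r} • η_{i₁}η_{j₁} ⋯ η_{i_r}η_{j_r}`. This monomial vanishes unless the
`2r` indices are distinct. If they are, they form a set `S`, and the list of pairs is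
`(e(σ 0), e(σ 1)), …` for the increasing enumeration `e` of `S` and a unique perfect matching
`σ ∈ matchings r`; reordering the monomial to `η_S` produces `sign σ`. Grouping the terms
by `S` therefore yields `Pf(Q|_S) • η_S`.
-/

open Finset

theorem List.prod_map_one_add {A ι : Type*} [Semiring A] [DecidableEq ι] (x : ι → A)
    {l : List ι} (hl : l.Nodup) :
    (l.map (1 + x ·)).prod = ∑ T ∈ l.toFinset.powerset, ((l.filter (· ∈ T)).map x).prod := by
  induction l with
  | nil => simp
  | cons a l ih =>
    obtain ⟨ha, hl⟩ := List.nodup_cons.1 hl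
    have ha' : a ∉ l.toFinset := by simpa using ha
    rw [List.map_cons, List.prod_cons, ih hl, List.toFinset_cons, sum_powerset_insert ha',
      add_mul, one_mul, mul_sum]
    congr 1 <;> refine sum_congr rfl fun T hT => ?_
    · have haT : a ∉ T := fun h => ha' (mem_powerset.1 hT h)
      rw [List.filter_cons_of_neg (by simpa using haT)]
    · have hfilter : l.filter (· ∈ insert a T) = l.filter (· ∈ T) :=
        List.filter_congr fun b hb => by simp [show b ≠ a from fun h => ha (h ▸ hb)]
      rw [List.filter_cons_of_pos (by simp), hfilter, List.map_cons, List.prod_cons]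

section SortedLists

variable {α : Type*} [LinearOrder α]

theorem Finset.filter_sort_eq_sort {s T : Finset α} (hT : T ⊆ s) :
    s.sort.filter (· ∈ T) = T.sort :=
  (s.sortedLT_sort.pairwise.sublist List.filter_sublist).eq_of_mem_iff
    T.sortedLT_sort.pairwise fun a => by simpa using fun h => hT h

theorem Finset.ofFn_orderEmbOfFin (S : Finset α) {m : ℕ} (h : S.card = m) :
    List.ofFn (S.orderEmbOfFin h) = S.sort := by
  rw [List.ofFn_eq_map, listMap_orderEmbOfFin_finRange]

theorem List.Nodup.exists_perm_eq_ofFn_orderEmbOfFin {S : Finset α} {m : ℕ} (h : S.card = m)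
    {w : List α} (hw : w.Nodup) (hwS : w.toFinset = S) :
    ∃ σ : Equiv.Perm (Fin m), w = List.ofFn (S.orderEmbOfFin h ∘ σ) := by
  have hlen : w.length = m := by rw [← h, ← hwS, List.toFinset_card_of_nodup hw]
  have hmem (k : Fin m) : w[k.val] ∈ S := hwS ▸ List.mem_toFinset.2 (List.getElem_mem _)
  set g : Fin m → Fin m := fun k => (S.orderIsoOfFin h).symm ⟨w[k.val], hmem k⟩
  have hg : Function.Injective g := fun k k' hkk' => by
    have := congrArg Subtype.val ((S.orderIsoOfFin h).symm.injective hkk')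
    exact Fin.ext (by simpa using hw.getElem_inj_iff.1 this)
  refine ⟨Equiv.ofBijective g hg.bijective_of_finite, List.ext_getElem (by simp [hlen]) ?_⟩
  intro k _ hk
  simp [g, ← Finset.coe_orderIsoOfFin_apply]

end SortedLists

namespace ExteriorAlgebra

variable {R M : Type*} [CommRing R] [AddCommGroup M] [Module R M]

theorem list_prod_map_ι_eq_zero_of_not_nodup {α : Type*} (v : α → M) {w : List α}
    (hw : ¬ w.Nodup) : (w.map fun a => ι R (v a)).prod = 0 := by
  rw [← List.ofFn_getElem_eq_map, ← ιMulti_apply]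
  refine (ιMulti R w.length).map_eq_zero_of_not_injective _ fun hinj => hw ?_
  exact List.nodup_iff_injective_get.2 fun k k' h =>
    hinj (by simp [List.get_eq_getElem] at h ⊢; rw [h])

theorem list_prod_ofFn_ι_comp_perm {n : ℕ} (v : Fin n → M) (σ : Equiv.Perm (Fin n)) :
    (List.ofFn fun k => ι R (v (σ k))).prod
      = (Equiv.Perm.sign σ : ℤ) • (List.ofFn fun k => ι R (v k)).prod := by
  simpa [ιMulti_apply, Units.smul_def] using (ιMulti R n).map_perm v σ

end ExteriorAlgebra

namespace GrassmannWick

section Pairs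

variable {α : Type*}

def pairWord (P : List (α × α)) : List α :=
  P.flatMap fun q => [q.1, q.2]

@[simp] theorem pairWord_nil : pairWord ([] : List (α × α)) = [] := rfl

@[simp] theorem pairWord_cons (q : α × α) (P : List (α × α)) :
    pairWord (q :: P) = q.1 :: q.2 :: pairWord P := rfl

@[simp] theorem length_pairWord (P : List (α × α)) : (pairWord P).length = 2 * P.length := by
  induction P with
  | nil => rfl
  | cons q P ih => simp [ih]; ring

theorem pairWord_injective : Function.Injective (pairWord (α := α)) := by
  intro P R h
  induction P generalizing R with
  | nil => cases R <;> simp_all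
  | cons q P ih =>
    cases R with
    | nil => simp at h
    | cons r R =>
      simp only [pairWord_cons, List.cons.injEq] at h
      rw [Prod.ext h.1 h.2.1, ih h.2.2]

variable {K : Type*} [CommSemiring K] (Q : α → α → K)

def pairWeight (P : List (α × α)) : K :=
  (P.map fun q => Q q.1 q.2).prod

@[simp] theorem pairWeight_nil : pairWeight Q [] = 1 := rfl

@[simp] theorem pairWeight_cons (q : α × α) (P : List (α × α)) :
    pairWeight Q (q :: P) = Q q.1 q.2 * pairWeight Q P := rfl

def pairUp {n : ℕ} (f : Fin (2 * n) → α) : List (α × α) :=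
  List.ofFn fun p => (f (pairIdx p 0), f (pairIdx p 1))

theorem pairWord_pairUp {n : ℕ} (f : Fin (2 * n) → α) : pairWord (pairUp f) = List.ofFn f := by
  rw [List.ofFn_mul' f]
  simp [pairWord, pairUp, List.flatMap, List.ofFn_succ, pairIdx, Function.comp_def]

theorem pairWeight_pairUp {n : ℕ} (f : Fin (2 * n) → α) :
    pairWeight Q (pairUp f) = ∏ p : Fin n, Q (f (pairIdx p 0)) (f (pairIdx p 1)) := by
  rw [pairWeight, pairUp, List.map_ofFn, List.prod_ofFn]
  rfl

end Pairs

variable {ι : Type*} [LinearOrder ι] [LocallyFiniteOrderTop ι]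

def partnerChoices : List ι → Finset (List (ι × ι))
  | [] => {[]}
  | i :: s => (Ioi i ×ˢ partnerChoices s).map
      ⟨fun q => (i, q.1) :: q.2, fun q r h => by simpa [Prod.ext_iff] using h⟩

theorem mem_partnerChoices {s : List ι} {P : List (ι × ι)} :
    P ∈ partnerChoices s ↔ P.map Prod.fst = s ∧ ∀ q ∈ P, q.1 < q.2 := by
  induction s generalizing P with
  | nil =>
    rw [partnerChoices, mem_singleton, List.map_eq_nil_iff]
    exact ⟨fun h => ⟨h, by simp [h]⟩, And.left⟩
  | cons i s ih =>
    simp only [partnerChoices, mem_map, mem_product, mem_Ioi, Prod.exists, ih]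
    constructor
    · rintro ⟨j, R, ⟨hij, rfl, hR⟩, rfl⟩
      exact ⟨rfl, List.forall_mem_cons.2 ⟨hij, hR⟩⟩
    · rintro ⟨hP, hlt⟩
      obtain ⟨⟨a, b⟩, R, rfl⟩ := List.exists_cons_of_ne_nil (l := P) (by rintro rfl; simp at hP)
      simp only [List.map_cons, List.cons.injEq, List.forall_mem_cons] at hP hlt
      obtain ⟨rfl, rfl⟩ := hP
      exact ⟨b, R, ⟨hlt.1, rfl, hlt.2⟩, rfl⟩

theorem prod_map_sum_Ioi {K A : Type*} [CommSemiring K] [Semiring A] [Algebra K A]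
    (Q : ι → ι → K) (y : ι → A) (s : List ι) :
    (s.map fun i => ∑ j ∈ Ioi i, Q i j • (y i * y j)).prod
      = ∑ P ∈ partnerChoices s, pairWeight Q P • ((pairWord P).map y).prod := by
  induction s with
  | nil => simp [partnerChoices]
  | cons i s ih =>
    rw [List.map_cons, List.prod_cons, ih, partnerChoices, sum_map, sum_product, sum_mul]
    refine sum_congr rfl fun j _ => ?_
    rw [mul_sum]
    refine sum_congr rfl fun P _ => ?_
    change _ = pairWeight Q ((i, j) :: P) • ((pairWord ((i, j) :: P)).map y).prod
    simp only [pairWord_cons, pairWeight_cons, List.map_cons, List.prod_cons,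
      smul_mul_smul_comm, mul_assoc]

variable [Fintype ι]

def orderedPairLists (ι : Type*) [LinearOrder ι] [LocallyFiniteOrderTop ι] [Fintype ι] :
    Finset (List (ι × ι)) :=
  univ.biUnion fun T : Finset ι => partnerChoices T.sort

theorem mem_orderedPairLists {P : List (ι × ι)} :
    P ∈ orderedPairLists ι ↔ (P.map Prod.fst).Pairwise (· < ·) ∧ ∀ q ∈ P, q.1 < q.2 := by
  simp only [orderedPairLists, mem_biUnion, mem_univ, true_and, mem_partnerChoices]
  constructor
  · rintro ⟨T, hT, hlt⟩
    exact ⟨hT ▸ T.sortedLT_sort.pairwise, hlt⟩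
  · rintro ⟨hsorted, hlt⟩
    exact ⟨_, ((List.toFinset_sort _ hsorted.nodup).2 (hsorted.imp le_of_lt)).symm, hlt⟩

theorem prod_sort_one_add_sum_Ioi {K A : Type*} [CommSemiring K] [Semiring A] [Algebra K A]
    (Q : ι → ι → K) (y : ι → A) :
    ((univ : Finset ι).sort.map fun i => 1 + ∑ j ∈ Ioi i, Q i j • (y i * y j)).prod
      = ∑ P ∈ orderedPairLists ι, pairWeight Q P • ((pairWord P).map y).prod := by
  have hdisj : (↑(univ : Finset (Finset ι)) : Set (Finset ι)).PairwiseDisjoint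
      fun T => partnerChoices T.sort := by
    intro T _ T' _ hne
    refine disjoint_left.2 fun P hP hP' => hne ?_
    rw [← T.sort_toFinset (· ≤ ·), ← T'.sort_toFinset (· ≤ ·),
      ← (mem_partnerChoices.1 hP).1, (mem_partnerChoices.1 hP').1]
  rw [List.prod_map_one_add _ (sort_nodup _ _), sort_toFinset, powerset_univ, orderedPairLists,
    sum_biUnion hdisj]
  refine sum_congr rfl fun T _ => ?_
  rw [filter_sort_eq_sort (subset_univ T), prod_map_sum_Ioi]

theorem pairUp_comp_mem_orderedPairLists_iff {n : ℕ} {E : Fin (2 * n) → ι} (hE : StrictMono E)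
    (σ : Equiv.Perm (Fin (2 * n))) : pairUp (E ∘ σ) ∈ orderedPairLists ι ↔ σ ∈ matchings n := by
  simp [mem_orderedPairLists, pairUp, List.pairwise_ofFn, matchings, hE.lt_iff_lt, and_comm]

def pairingsOn (S : Finset ι) : Finset (List (ι × ι)) :=
  (orderedPairLists ι).filter fun P => (pairWord P).Nodup ∧ (pairWord P).toFinset = S

theorem pairingsOn_eq_image {S : Finset ι} {n : ℕ} (h : S.card = 2 * n) :
    pairingsOn S
      = (matchings n).image fun σ : Equiv.Perm (Fin (2 * n)) => pairUp (S.orderEmbOfFin h ∘ σ) := by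
  set E := S.orderEmbOfFin h
  refine Finset.ext fun P => ?_
  simp only [pairingsOn, mem_filter, mem_image]
  constructor
  · rintro ⟨hP, hnodup, hS⟩
    obtain ⟨σ, hσ⟩ := hnodup.exists_perm_eq_ofFn_orderEmbOfFin h hS
    rw [← pairWord_pairUp] at hσ
    obtain rfl := pairWord_injective hσ
    exact ⟨σ, (pairUp_comp_mem_orderedPairLists_iff E.strictMono σ).1 hP, rfl⟩
  · rintro ⟨σ, hσ, rfl⟩
    refine ⟨(pairUp_comp_mem_orderedPairLists_iff E.strictMono σ).2 hσ, ?_⟩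
    rw [pairWord_pairUp]
    refine ⟨List.nodup_ofFn.2 (E.injective.comp σ.injective), ?_⟩
    rw [List.toFinset_eq_of_perm _ _ (σ.ofFn_comp_perm E), ofFn_orderEmbOfFin, sort_toFinset]

theorem card_eq_two_mul_length_of_mem_pairingsOn {S : Finset ι} {P : List (ι × ι)}
    (hP : P ∈ pairingsOn S) : S.card = 2 * P.length := by
  obtain ⟨-, hnodup, hS⟩ := mem_filter.1 hP
  rw [← hS, List.toFinset_card_of_nodup hnodup, length_pairWord]

theorem pairingsOn_eq_empty_of_odd {S : Finset ι} (hS : Odd S.card) : pairingsOn S = ∅ :=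
  eq_empty_of_forall_notMem fun _ hP =>
    Nat.not_even_iff_odd.2 hS ⟨_, (card_eq_two_mul_length_of_mem_pairingsOn hP).trans (two_mul _)⟩

variable {R M : Type*} [CommRing R] [AddCommGroup M] [Module R M] (Q : ι → ι → R) (v : ι → M)

theorem sum_orderedPairLists_eq_sum_pairingsOn :
    ∑ P ∈ orderedPairLists ι,
        pairWeight Q P • ((pairWord P).map fun i => ExteriorAlgebra.ι R (v i)).prod
      = ∑ S : Finset ι, ∑ P ∈ pairingsOn S,
          pairWeight Q P • ((pairWord P).map fun i => ExteriorAlgebra.ι R (v i)).prod := by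
  rw [← sum_filter_of_ne fun P _ hP => by_contra fun hnodup =>
      hP (by rw [ExteriorAlgebra.list_prod_map_ι_eq_zero_of_not_nodup v hnodup, smul_zero]),
    ← sum_fiberwise _ fun P => (pairWord P).toFinset]
  simp only [pairingsOn, filter_filter]

theorem sum_pairingsOn_eq_pfaffian_smul {S : Finset ι} {n : ℕ} (h : S.card = 2 * n) :
    ∑ P ∈ pairingsOn S,
        pairWeight Q P • ((pairWord P).map fun i => ExteriorAlgebra.ι R (v i)).prod
      = pfaffian n (fun a b => Q (S.orderEmbOfFin h a) (S.orderEmbOfFin h b))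
          • (S.sort.map fun i => ExteriorAlgebra.ι R (v i)).prod := by
  set E := S.orderEmbOfFin h
  have hinj : Set.InjOn (fun σ : Equiv.Perm (Fin (2 * n)) => pairUp (E ∘ σ)) (matchings n) :=
    fun σ _ σ' _ hσσ' => by
      have := congrArg pairWord hσσ'
      rw [pairWord_pairUp, pairWord_pairUp, List.ofFn_inj] at this
      exact Equiv.ext fun k => E.injective (congrFun this k)
  rw [pairingsOn_eq_image h, sum_image hinj, pfaffian, sum_smul, ← ofFn_orderEmbOfFin S h,
    List.map_ofFn]
  refine sum_congr rfl fun σ _ => ?_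
  rw [pairWord_pairUp, pairWeight_pairUp, List.map_ofFn]
  simp only [Function.comp_def]
  rw [ExteriorAlgebra.list_prod_ofFn_ι_comp_perm (fun k => v (E k)), smul_assoc, smul_comm]

end GrassmannWick

open GrassmannWick

/-- **Fermionic Wick formula, algebraic form**: in the Grassmann algebra over a
commutative ring `K` on generators `η₁,…,η_N`, for an antisymmetric matrix `Q`, the
ordered product `∏ᵢ→ (1 + ∑_{i<j} Q_{ij} ηᵢηⱼ)` expands as
`∑_S c_S η_S` where, for `S` listed increasingly as `i₁ < ⋯ < i_r`, the coefficient
`c_S` is `Pf((Q_{i_k i_l}))` if `r` is even and `0` otherwise; in particular the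
coefficient of `η_{i₁}⋯η_{i_{2n}}` is `Pf((Q_{i_k i_l})_{1≤k,l≤2n})`. -/
theorem grassmann_wick {K : Type*} [CommRing K] (N : ℕ)
    (Q : Fin N → Fin N → K) :
    (List.ofFn fun i : Fin N =>
        (1 : ExteriorAlgebra K (Fin N → K))
          + ∑ j ∈ Finset.Ioi i, Q i j • (grassGen K N i * grassGen K N j)).prod
      = ∑ S : Finset (Fin N),
          (if h : S.card % 2 = 0 then
              pfaffian (S.card / 2) (fun a b =>
                Q (S.orderIsoOfFin (by omega : S.card = 2 * (S.card / 2)) a : Fin N)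
                  (S.orderIsoOfFin (by omega : S.card = 2 * (S.card / 2)) b : Fin N))
            else 0) •
            (List.ofFn fun a : Fin S.card => grassGen K N (S.orderIsoOfFin rfl a)).prod := by
  have hgen : grassGen K N = fun i => ExteriorAlgebra.ι K (Pi.single i 1) := rfl
  rw [List.ofFn_eq_map, ← Fin.sort_univ, prod_sort_one_add_sum_Ioi, hgen,
    sum_orderedPairLists_eq_sum_pairingsOn]
  refine sum_congr rfl fun S _ => ?_
  split_ifs with hS
  · rw [sum_pairingsOn_eq_pfaffian_smul Q _ (by omega : S.card = 2 * (S.card / 2)),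
      ← ofFn_orderEmbOfFin S rfl, List.map_ofFn]
    rfl
  · rw [pairingsOn_eq_empty_of_odd (Nat.odd_iff.2 (by omega)), sum_empty, zero_smul]
end
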